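/- arXiv:0909.2769 — 7 statements merged into one kernel-verified Lean document; each statement's English description precedes it below -/
import Mathlib

section
/- If f is a fall k-coloring of the lexicographic product G[H], then for each vertex x of G, the restriction of f to the copy H_x = {x} × V(H) is a fall coloring of H_x using exactly |f({x} × V(H))| colors (i.e., every vertex of H_x sees all colors of f({x} × V(H)) within its closed neighborhood inside H_x). -/
open SimpleGraph

/-- A fall coloring: a proper coloring in which every vertex sees all colors
on its closed neighborhood. -/
def IsFallColoring {α : Type*} (G : SimpleGraph α) {k : ℕ} (f : α → Fin k) : Prop :=
  (∀ u v, G.Adj u v → f u ≠ f v) ∧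
  (∀ v (c : Fin k), ∃ u, (u = v ∨ G.Adj v u) ∧ f u = c)

/-- The set of positive integers `k` such that `G` has a fall `k`-coloring. -/
def Fall {α : Type*} (G : SimpleGraph α) : Set ℕ :=
  {k | 0 < k ∧ ∃ f : α → Fin k, IsFallColoring G f}

/-- The lexicographic product `G[H]`. -/
def lexProd {α β : Type*} (G : SimpleGraph α) (H : SimpleGraph β) : SimpleGraph (α × β) :=
  SimpleGraph.fromRel (fun p q => G.Adj p.1 q.1 ∨ (p.1 = q.1 ∧ H.Adj p.2 q.2))

/-- The categorical (tensor) product `G × H`. -/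
def tensorProd {α β : Type*} (G : SimpleGraph α) (H : SimpleGraph β) : SimpleGraph (α × β) :=
  SimpleGraph.fromRel (fun p q => G.Adj p.1 q.1 ∧ H.Adj p.2 q.2)

/-- A type-II graph homomorphism from `G` to `H`. -/
def IsTypeII {α β : Type*} (G : SimpleGraph α) (H : SimpleGraph β) (f : α → β) : Prop :=
  (∀ u v, G.Adj u v → H.Adj (f u) (f v)) ∧
  (∀ u₁ v₁, H.Adj u₁ v₁ → ∀ v, f v = v₁ → ∃ u, f u = u₁ ∧ G.Adj u v)

theorem lexProd_adj_iff {α β : Type*} {G : SimpleGraph α} {H : SimpleGraph β} {p q : α × β} :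
    (lexProd G H).Adj p q ↔ G.Adj p.1 q.1 ∨ (p.1 = q.1 ∧ H.Adj p.2 q.2) := by
  rw [lexProd, fromRel_adj]
  constructor
  · rintro ⟨-, h | hG | ⟨hx, hH⟩⟩
    · exact h
    · exact Or.inl hG.symm
    · exact Or.inr ⟨hx.symm, hH.symm⟩
  · intro h
    refine ⟨?_, Or.inl h⟩
    rintro rfl
    rcases h with hG | ⟨-, hH⟩
    exacts [G.irrefl hG, H.irrefl hH]

/-- restriction of a fall coloring of G[H] to a copy H_x is a fall
coloring of H_x with the colors appearing on that copy. -/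
theorem fall_coloring_restrict_lexProd {α β : Type*} (G : SimpleGraph α) (H : SimpleGraph β)
    {k : ℕ} (f : α × β → Fin k) (hf : IsFallColoring (lexProd G H) f) (x : α) :
    (∀ y y' : β, H.Adj y y' → f (x, y) ≠ f (x, y')) ∧
    (∀ (y : β) (c : Fin k), (∃ y₀ : β, f (x, y₀) = c) →
      ∃ y' : β, (y' = y ∨ H.Adj y y') ∧ f (x, y') = c) := by
  obtain ⟨hproper, hcomplete⟩ := hf
  refine ⟨fun y y' hH => hproper _ _ (lexProd_adj_iff.2 (Or.inr ⟨rfl, hH⟩)), ?_⟩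
  rintro y c ⟨y₀, rfl⟩
  obtain ⟨u, rfl | hadj, hcolor⟩ := hcomplete (x, y) (f (x, y₀))
  · exact ⟨y, Or.inl rfl, hcolor⟩
  obtain ⟨x', y'⟩ := u
  rcases lexProd_adj_iff.1 hadj with hG | ⟨rfl, hH⟩
  -- a `G`-neighbour of `(x, y)` is adjacent to all of `H_x`, so it cannot repeat a colour of `H_x`
  · exact absurd hcolor (hproper _ _ (lexProd_adj_iff.2 (Or.inl hG.symm)))
  · exact ⟨y', Or.inr hH, hcolor⟩
end

section
/- If G and H are graphs with Fall(G) ≠ ∅ and Fall(H) ≠ ∅, then χ_f(G[H]) ≤ χ_f(G)·χ_f(H) and ψ_f(G)·ψ_f(H) ≤ ψ_f(G[H]), where χ_f and ψ_f denote the minimum and maximum elements of the Fall set respectively. -/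
open SimpleGraph

/-!
If `f` and `g` are fall colorings of `G` and `H` with `k` and `l` colors, then
`(x, y) ↦ (f x, g y)` is a fall coloring of `G[H]` with `k * l` colors: a color `(c₁, c₂)` is
found in the copy of `H` at `x` when `c₁ = f x`, and otherwise in the copy at a `G`-neighbour of
`x` colored `c₁`. Hence `Fall G * Fall H ⊆ Fall G[H]`, which gives both bounds once the fall sets
of nonempty finite graphs are bounded by the number of vertices. On an empty vertex type every
`k > 0` lies in the fall set, whose `sSup` is then the junk value `0`.
-/

section

variable {α β : Type*} {G : SimpleGraph α} {H : SimpleGraph β}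

lemma lexProd_adj {p q : α × β} :
    (lexProd G H).Adj p q ↔ G.Adj p.1 q.1 ∨ (p.1 = q.1 ∧ H.Adj p.2 q.2) := by
  rw [lexProd, fromRel_adj]
  constructor
  · rintro ⟨-, h | h | ⟨he, h⟩⟩
    · exact h
    · exact Or.inl h.symm
    · exact Or.inr ⟨he.symm, h.symm⟩
  · rintro (h | ⟨he, h⟩)
    · exact ⟨fun hpq => h.ne (congrArg Prod.fst hpq), Or.inl (Or.inl h)⟩
    · exact ⟨fun hpq => h.ne (congrArg Prod.snd hpq), Or.inl (Or.inr ⟨he, h⟩)⟩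

lemma IsFallColoring.lexProd {k l : ℕ} {f : α → Fin k} {g : β → Fin l}
    (hf : IsFallColoring G f) (hg : IsFallColoring H g) :
    IsFallColoring (lexProd G H) fun p => finProdFinEquiv (f p.1, g p.2) := by
  obtain ⟨hf_proper, hf_sees⟩ := hf
  obtain ⟨hg_proper, hg_sees⟩ := hg
  refine ⟨fun p q hpq heq => ?_, fun ⟨x, y⟩ c => ?_⟩
  · obtain ⟨hfe, hge⟩ := Prod.ext_iff.mp (finProdFinEquiv.injective heq)
    rcases lexProd_adj.mp hpq with h | ⟨-, h⟩
    · exact hf_proper _ _ h hfe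
    · exact hg_proper _ _ h hge
  obtain ⟨⟨c₁, c₂⟩, rfl⟩ := finProdFinEquiv.surjective c
  by_cases hc₁ : f x = c₁
  · obtain ⟨u, hu, hgu⟩ := hg_sees y c₂
    refine ⟨(x, u), ?_, by simp [hc₁, hgu]⟩
    rcases hu with rfl | hyu
    · exact Or.inl rfl
    · exact Or.inr (lexProd_adj.mpr (Or.inr ⟨rfl, hyu⟩))
  · obtain ⟨u, hu, hfu⟩ := hf_sees x c₁
    have hxu : G.Adj x u := hu.resolve_left fun h => hc₁ (h ▸ hfu)
    obtain ⟨w, -, hw⟩ := hg_sees y c₂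
    exact ⟨(u, w), Or.inr (lexProd_adj.mpr (Or.inl hxu)), by simp [hfu, hw]⟩

lemma mul_mem_fall_lexProd {k l : ℕ} (hk : k ∈ Fall G) (hl : l ∈ Fall H) :
    k * l ∈ Fall (lexProd G H) := by
  obtain ⟨hk_pos, f, hf⟩ := hk
  obtain ⟨hl_pos, g, hg⟩ := hl
  exact ⟨Nat.mul_pos hk_pos hl_pos, _, hf.lexProd hg⟩

lemma le_card_of_mem_fall [Fintype α] [Nonempty α] {k : ℕ} (hk : k ∈ Fall G) :
    k ≤ Fintype.card α := by
  obtain ⟨-, f, -, hf_sees⟩ := hk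
  have hsurj : Function.Surjective f := fun c =>
    let ⟨u, _, hu⟩ := hf_sees (Classical.arbitrary α) c
    ⟨u, hu⟩
  simpa using Fintype.card_le_of_surjective f hsurj

lemma bddAbove_fall [Fintype α] [Nonempty α] (G : SimpleGraph α) : BddAbove (Fall G) :=
  ⟨Fintype.card α, fun _ hk => le_card_of_mem_fall hk⟩

lemma sSup_fall_of_isEmpty [IsEmpty α] (G : SimpleGraph α) : sSup (Fall G) = 0 := by
  have hunbdd : ¬ BddAbove (Fall G) := fun ⟨b, hb⟩ =>
    Nat.not_succ_le_self b (hb ⟨b.succ_pos, isEmptyElim, isEmptyElim, isEmptyElim⟩)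
  rw [csSup_of_not_bddAbove hunbdd, csSup_empty, Nat.bot_eq_zero]

end

/-- fall chromatic and achromatic bounds for the lexicographic product. -/
theorem fall_lexProd_bounds {α β : Type*} [Fintype α] [Fintype β]
    (G : SimpleGraph α) (H : SimpleGraph β)
    (hG : (Fall G).Nonempty) (hH : (Fall H).Nonempty) :
    sInf (Fall (lexProd G H)) ≤ sInf (Fall G) * sInf (Fall H) ∧
    sSup (Fall G) * sSup (Fall H) ≤ sSup (Fall (lexProd G H)) := by
  refine ⟨Nat.sInf_le (mul_mem_fall_lexProd (Nat.sInf_mem hG) (Nat.sInf_mem hH)), ?_⟩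
  rcases isEmpty_or_nonempty α with _ | _
  · simp [sSup_fall_of_isEmpty G]
  rcases isEmpty_or_nonempty β with _ | _
  · simp [sSup_fall_of_isEmpty H]
  exact le_csSup (bddAbove_fall _)
    (mul_mem_fall_lexProd (Nat.sSup_mem hG (bddAbove_fall G)) (Nat.sSup_mem hH (bddAbove_fall H)))
end

section
/- If there exists a type-II graph homomorphism from G to H and k ∈ Fall(H), then k ∈ Fall(G). -/
open SimpleGraph

theorem IsTypeII.exists_closedNbhd_preimage {α β : Type*} {G : SimpleGraph α} {H : SimpleGraph β}
    {f : α → β} (hf : IsTypeII G H f) (v : α) {u : β} (hu : u = f v ∨ H.Adj (f v) u) :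
    ∃ w, (w = v ∨ G.Adj v w) ∧ f w = u := by
  rcases hu with rfl | hadj
  · exact ⟨v, Or.inl rfl, rfl⟩
  · obtain ⟨w, hw, hwv⟩ := hf.2 u (f v) hadj.symm v rfl
    exact ⟨w, Or.inr hwv.symm, hw⟩

theorem IsFallColoring.comp_isTypeII {α β : Type*} {G : SimpleGraph α} {H : SimpleGraph β}
    {f : α → β} (hf : IsTypeII G H f) {k : ℕ} {c : β → Fin k} (hc : IsFallColoring H c) :
    IsFallColoring G (c ∘ f) := by
  refine ⟨fun u v huv => hc.1 _ _ (hf.1 u v huv), fun v i => ?_⟩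
  obtain ⟨u, hu, hui⟩ := hc.2 (f v) i
  obtain ⟨w, hw, rfl⟩ := hf.exists_closedNbhd_preimage v hu
  exact ⟨w, hw, hui⟩

/-- type-II homomorphisms pull back fall colorings. -/
theorem mem_fall_of_isTypeII {α β : Type*}
    (G : SimpleGraph α) (H : SimpleGraph β) (f : α → β)
    (hf : IsTypeII G H f) (k : ℕ) (hk : k ∈ Fall H) : k ∈ Fall G := by
  obtain ⟨hk0, c, hc⟩ := hk
  exact ⟨hk0, c ∘ f, hc.comp_isTypeII hf⟩
end

section
/- The map f : V(C_5 × C_5) → [5] defined on vertex pairs (i,j) with i,j ∈ {0,1,2,3,4} by f((i,j)) = ((i + 2j) mod 5) + 1 is a fall 5-coloring of the categorical product C_5 × C_5. In particular, Fall(C_5 × C_5) ≠ ∅ even though Fall(C_5) = ∅. -/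
open SimpleGraph

/-!
The linear map `(i, j) ↦ i + 2j` sends the four neighbours `(i ± 1, j ± 1)` of `(i, j)` to the
four nonzero shifts `±1 ± 2` of its colour, so it is proper and every vertex sees all five
colours. On `C₅` a fall colouring uses at most `3` colours (closed neighbourhoods have three
vertices) and at least `3` (the cycle is odd). A fall `3`-colouring of a cycle forces any three
consecutive vertices to get distinct colours, hence `f (v + 3) = f v`; as `3 · 2 ≡ 1 (mod 5)`
this makes adjacent vertices equal in colour.
-/

section General

variable {α : Type*} {G : SimpleGraph α} {k : ℕ} {f : α → Fin k}

theorem IsFallColoring.colorable (hf : IsFallColoring G f) : G.Colorable k :=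
  ⟨Coloring.mk f fun h => hf.1 _ _ h⟩

theorem IsFallColoring.le_degree_add_one [G.LocallyFinite] [DecidableEq α]
    (hf : IsFallColoring G f) (v : α) : k ≤ G.degree v + 1 := by
  have hsurj : Set.SurjOn f (insert v (G.neighborFinset v) : Finset α)
      (Finset.univ : Finset (Fin k)) := by
    intro c _
    obtain ⟨u, hu, rfl⟩ := hf.2 v c
    refine ⟨u, ?_, rfl⟩
    rcases hu with rfl | hu
    · simp
    · simp [hu]
  calc k = (Finset.univ : Finset (Fin k)).card := (Finset.card_fin k).symm
    _ ≤ (insert v (G.neighborFinset v)).card := Finset.card_le_card_of_surjOn f hsurj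
    _ ≤ G.degree v + 1 := Finset.card_insert_le _ _

end General

theorem tensorProd_adj {α β : Type*} {G : SimpleGraph α} {H : SimpleGraph β} {p q : α × β} :
    (tensorProd G H).Adj p q ↔ G.Adj p.1 q.1 ∧ H.Adj p.2 q.2 := by
  simp only [tensorProd, fromRel_adj, ne_eq]
  constructor
  · rintro ⟨-, h | ⟨h₁, h₂⟩⟩
    exacts [h, ⟨h₁.symm, h₂.symm⟩]
  · intro h
    exact ⟨fun hpq => h.1.ne (congrArg Prod.fst hpq), Or.inl h⟩

theorem cycleGraph_adj_iff_sub {n : ℕ} {u v : Fin (n + 2)} :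
    (cycleGraph (n + 2)).Adj u v ↔ v - u = 1 ∨ v - u = -1 := by
  rw [cycleGraph_adj, ← neg_sub v u, neg_eq_iff_eq_neg, or_comm]

section LinearColoring

attribute [local instance] Fin.instCommRing

theorem isFallColoring_tensorProd_cycleGraph_linear {n : ℕ} (a : Fin (n + 2))
    (hproper : ∀ s ∈ ({1, -1} : Finset (Fin (n + 2))), ∀ t ∈ ({1, -1} : Finset (Fin (n + 2))),
      s + a * t ≠ 0)
    (hcover : ∀ d : Fin (n + 2), d ≠ 0 → ∃ s ∈ ({1, -1} : Finset (Fin (n + 2))),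
      ∃ t ∈ ({1, -1} : Finset (Fin (n + 2))), s + a * t = d) :
    IsFallColoring (tensorProd (cycleGraph (n + 2)) (cycleGraph (n + 2)))
      (fun p : Fin (n + 2) × Fin (n + 2) => p.1 + a * p.2) := by
  simp only [Finset.mem_insert, Finset.mem_singleton] at hproper hcover
  refine ⟨fun p q hpq => ?_, fun v c => ?_⟩
  · rw [tensorProd_adj, cycleGraph_adj_iff_sub, cycleGraph_adj_iff_sub] at hpq
    have hshift : q.1 + a * q.2 - (p.1 + a * p.2) = (q.1 - p.1) + a * (q.2 - p.2) := by ring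
    intro hcol
    exact hproper _ hpq.1 _ hpq.2 (by rw [← hshift, sub_eq_zero]; exact hcol.symm)
  · by_cases hc : c = v.1 + a * v.2
    · exact ⟨v, Or.inl rfl, hc.symm⟩
    obtain ⟨s, hs, t, ht, hst⟩ := hcover (c - (v.1 + a * v.2)) (sub_ne_zero.mpr hc)
    refine ⟨(v.1 + s, v.2 + t), Or.inr ?_, ?_⟩
    · rw [tensorProd_adj, cycleGraph_adj_iff_sub, cycleGraph_adj_iff_sub, add_sub_cancel_left,
        add_sub_cancel_left]
      exact ⟨hs, ht⟩
    · linear_combination hst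

end LinearColoring

theorem fin_three_exists_ne_and_ne (x y : Fin 3) : ∃ c, c ≠ x ∧ c ≠ y := by
  revert x y; decide

theorem fin_three_eq_of_ne_and_ne {x y c d : Fin 3} (hxy : x ≠ y) (hc : c ≠ x ∧ c ≠ y)
    (hd : d ≠ x ∧ d ≠ y) : c = d := by
  revert x y c d; decide

section Cycle

variable {n : ℕ} {f : Fin (n + 2) → Fin 3}

theorem IsFallColoring.cycleGraph_three_consecutive_ne (hf : IsFallColoring (cycleGraph (n + 2)) f)
    (v : Fin (n + 2)) :
    f (v - 1) ≠ f v ∧ f v ≠ f (v + 1) ∧ f (v - 1) ≠ f (v + 1) := by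
  have hprev : (cycleGraph (n + 2)).Adj (v - 1) v := by simp [cycleGraph_adj_iff_sub]
  have hnext : (cycleGraph (n + 2)).Adj v (v + 1) := by simp [cycleGraph_adj_iff_sub]
  refine ⟨hf.1 _ _ hprev, hf.1 _ _ hnext, fun hend => ?_⟩
  obtain ⟨c, hcv, hcnext⟩ := fin_three_exists_ne_and_ne (f v) (f (v + 1))
  obtain ⟨u, hu | hu, rfl⟩ := hf.2 v c
  · exact hcv (congrArg f hu)
  rw [cycleGraph_adj_iff_sub, sub_eq_iff_eq_add', sub_eq_iff_eq_add', ← sub_eq_add_neg] at hu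
  rcases hu with rfl | rfl
  exacts [hcnext rfl, hcnext hend]

theorem IsFallColoring.cycleGraph_apply_add_three (hf : IsFallColoring (cycleGraph (n + 2)) f)
    (v : Fin (n + 2)) : f (v + 3) = f v := by
  obtain ⟨h₀, -, h₁⟩ := hf.cycleGraph_three_consecutive_ne (v + 1)
  obtain ⟨h₂, h₃, h₄⟩ := hf.cycleGraph_three_consecutive_ne (v + 1 + 1)
  simp only [add_sub_cancel_right] at h₀ h₁ h₂ h₄
  rw [show (3 : Fin (n + 2)) = 1 + 1 + 1 by ext; simp [Fin.val_add], ← add_assoc, ← add_assoc]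
  exact fin_three_eq_of_ne_and_ne h₂ ⟨h₄.symm, h₃.symm⟩ ⟨h₀, h₁⟩

end Cycle

theorem fall_cycleGraph_five_eq_empty : Fall (cycleGraph 5) = ∅ := by
  refine Set.eq_empty_of_forall_notMem ?_
  rintro k ⟨-, f, hf⟩
  have hle : k ≤ 3 := by
    have := hf.le_degree_add_one (0 : Fin 5)
    rwa [cycleGraph_degree_three_le] at this
  have hge : 3 ≤ k := by
    have := hf.colorable.chromaticNumber_le
    rw [chromaticNumber_cycleGraph_of_odd 5 (by norm_num) (by decide)] at this
    exact_mod_cast this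
  obtain rfl : k = 3 := le_antisymm hle hge
  have hperiod : f 0 = f 1 :=
    calc f 0 = f (0 + 3 + 3) := by
          rw [hf.cycleGraph_apply_add_three, hf.cycleGraph_apply_add_three]
      _ = f 1 := rfl
  exact hf.1 0 1 (by decide) hperiod

/-- (i,j) ↦ i + 2j (mod 5) is a fall 5-coloring of C₅ × C₅. -/
theorem fall_coloring_tensor_C5_C5 :
    IsFallColoring (tensorProd (SimpleGraph.cycleGraph 5) (SimpleGraph.cycleGraph 5))
      (fun p : Fin 5 × Fin 5 => p.1 + 2 * p.2) ∧
    (Fall (tensorProd (SimpleGraph.cycleGraph 5) (SimpleGraph.cycleGraph 5))).Nonempty ∧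
    Fall (SimpleGraph.cycleGraph 5) = ∅ := by
  have hcol : IsFallColoring (tensorProd (cycleGraph 5) (cycleGraph 5))
      (fun p : Fin 5 × Fin 5 => p.1 + 2 * p.2) :=
    isFallColoring_tensorProd_cycleGraph_linear (n := 3) 2 (by decide) (by decide)
  exact ⟨hcol, ⟨5, by norm_num, _, hcol⟩, fall_cycleGraph_five_eq_empty⟩
end

section
/- Let G be a graph and 1 ≤ t ≤ δ(G)+1, where δ(G) is the minimum degree. Then G has a fall t-coloring if and only if there exists a graph H obtained from G by, for each vertex v, choosing t−1 vertices in N_G(v) and adding edges making these t−1 vertices pairwise adjacent, such that χ(H) = t. -/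
open SimpleGraph

/-!
A fall `t`-coloring `f` lets each vertex `v` pick one neighbour of every colour other than `f v`;
these `t - 1` rainbow neighbours form `S v`, and `f` stays proper after making every `S v` a clique.
Conversely, in any graph of `Ĝ_t` the set `{v} ∪ S v` is a clique of size `t`, so it forces
`χ ≥ t`, and a proper `t`-coloring must use every colour on it, i.e. on the closed neighbourhood
of `v`.
-/

namespace SimpleGraph

variable {α : Type*} {G : SimpleGraph α} {S : α → Finset α}

variable (G) in
/-- `G` with every `S v` turned into a clique; the graphs of `Ĝ_t` are those with
`S v` a set of `t - 1` neighbours of `v`. -/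
def withCliques (S : α → Finset α) : SimpleGraph α :=
  fromRel fun x y => G.Adj x y ∨ ∃ v, x ∈ S v ∧ y ∈ S v

lemma le_withCliques : G ≤ G.withCliques S := fun _ _ h => by
  simp [withCliques, h, h.ne]

lemma isClique_insert_withCliques [DecidableEq α] {v : α} (hv : ∀ u ∈ S v, G.Adj v u) :
    (G.withCliques S).IsClique (insert v (S v) : Finset α) := by
  rw [Finset.coe_insert]
  refine IsClique.insert (fun x hx y hy hxy => ?_) fun u hu _ => le_withCliques (hv u hu)
  simp only [withCliques, fromRel_adj]
  exact ⟨hxy, Or.inl (Or.inr ⟨v, hx, hy⟩)⟩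

lemma card_insert_of_forall_adj [DecidableEq α] {v : α} {s : Finset α}
    (hv : ∀ u ∈ s, G.Adj v u) : (insert v s).card = s.card + 1 :=
  Finset.card_insert_of_notMem fun h => G.irrefl (hv v h)

lemma colorable_withCliques {k : ℕ} {f : α → Fin k} (hf : ∀ u v, G.Adj u v → f u ≠ f v)
    (hS : ∀ v, Set.InjOn f (S v)) : (G.withCliques S).Colorable k := by
  refine ⟨Coloring.mk f fun {x y} h => ?_⟩
  rw [withCliques, fromRel_adj] at h
  obtain ⟨hne, (h | ⟨v, hx, hy⟩) | (h | ⟨v, hy, hx⟩)⟩ := h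
  · exact hf x y h
  · exact fun hxy => hne (hS v hx hy hxy)
  · exact (hf y x h).symm
  · exact fun hxy => hne (hS v hx hy hxy)

lemma Coloring.isFallColoring_of_withCliques {k : ℕ} (C : (G.withCliques S).Coloring (Fin k))
    (hS : ∀ v, ∀ u ∈ S v, G.Adj v u) (hcard : ∀ v, (S v).card + 1 = k) :
    IsFallColoring G C := by
  classical
  refine ⟨fun u v h => C.valid (le_withCliques h), fun v c => ?_⟩
  have hsize : Fintype.card (Fin k) ≤ (insert v (S v)).card := by
    rw [card_insert_of_forall_adj (hS v), hcard, Fintype.card_fin]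
  obtain ⟨u, hu, rfl⟩ :=
    C.surjOn_of_card_le_isClique (isClique_insert_withCliques (hS v)) hsize (Set.mem_univ c)
  rcases Finset.mem_insert.mp hu with rfl | hu
  · exact ⟨u, Or.inl rfl, rfl⟩
  · exact ⟨u, Or.inr (hS v u hu), rfl⟩

end SimpleGraph

lemma IsFallColoring.exists_rainbow_neighbors {α : Type*} {G : SimpleGraph α} {k : ℕ}
    {f : α → Fin k} (hf : IsFallColoring G f) (v : α) :
    ∃ s : Finset α, (∀ u ∈ s, G.Adj v u) ∧ s.card = k - 1 ∧ Set.InjOn f s := by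
  classical
  choose g hg using hf.2 v
  have hfg : Function.LeftInverse f g := fun c => (hg c).2
  refine ⟨(Finset.univ.erase (f v)).image g, ?_, ?_, ?_⟩
  · simp only [Finset.mem_image, Finset.mem_erase, Finset.mem_univ, and_true]
    rintro _ ⟨c, hc, rfl⟩
    refine (hg c).1.resolve_left fun h => hc ?_
    rw [← hfg c, h]
  · rw [Finset.card_image_of_injective _ hfg.injective, Finset.card_erase_of_mem
      (Finset.mem_univ _), Finset.card_univ, Fintype.card_fin]
  · simp only [Finset.coe_image]
    rintro _ ⟨c, -, rfl⟩ _ ⟨d, -, rfl⟩ h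
    rw [hfg c, hfg d] at h
    rw [h]

theorem mem_fall_iff_chromatic_general {α : Type*} [Fintype α] [Nonempty α]
    (G : SimpleGraph α) [DecidableRel G.Adj] (t : ℕ) :
    t ∈ Fall G ↔
      ∃ S : α → Finset α, (∀ v, S v ⊆ G.neighborFinset v) ∧ (∀ v, (S v).card = t - 1) ∧
        (SimpleGraph.fromRel fun x y =>
          G.Adj x y ∨ ∃ v, x ∈ S v ∧ y ∈ S v).chromaticNumber = (t : ℕ∞) := by
  classical
  constructor
  · rintro ⟨ht, f, hf⟩
    choose S hSadj hScard hSinj using hf.exists_rainbow_neighbors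
    refine ⟨S, fun v u hu => (G.mem_neighborFinset v u).mpr (hSadj v u hu), hScard,
      le_antisymm (chromaticNumber_le_iff_colorable.mpr (colorable_withCliques hf.1 hSinj)) ?_⟩
    inhabit α
    have hclique := (isClique_insert_withCliques (hSadj default)).card_le_chromaticNumber
    rwa [card_insert_of_forall_adj (hSadj _), hScard, Nat.sub_add_cancel ht] at hclique
  · rintro ⟨S, hSsub, hScard, hχ⟩
    have hSadj : ∀ v, ∀ u ∈ S v, G.Adj v u := fun v u hu =>
      (G.mem_neighborFinset v u).mp (hSsub v hu)
    obtain ⟨C⟩ := chromaticNumber_le_iff_colorable.mp hχ.le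
    have ht : 0 < t := Fin.pos (C (Classical.arbitrary α))
    exact ⟨ht, C, C.isFallColoring_of_withCliques hSadj fun v => by
      rw [hScard v, Nat.sub_add_cancel ht]⟩

/-- fall t-colorings of G reduce to proper t-colorings of graphs
obtained from G by making, for each vertex, t-1 chosen neighbors pairwise adjacent. -/
theorem mem_fall_iff_chromatic {α : Type*} [Fintype α] [Nonempty α]
    (G : SimpleGraph α) [DecidableRel G.Adj] (t : ℕ)
    (ht1 : 1 ≤ t) (ht2 : t ≤ G.minDegree + 1) :
    t ∈ Fall G ↔
      ∃ S : α → Finset α, (∀ v, S v ⊆ G.neighborFinset v) ∧ (∀ v, (S v).card = t - 1) ∧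
        (SimpleGraph.fromRel fun x y =>
          G.Adj x y ∨ ∃ v, x ∈ S v ∧ y ∈ S v).chromaticNumber = (t : ℕ∞) :=
  mem_fall_iff_chromatic_general G t
end

section
/- For every graph G, the Mycielskian M(G) has no fall k-coloring for any positive integer k: Fall(M(G)) = ∅. -/
open SimpleGraph

/-- The Mycielskian of a graph. -/
def mycielskian {α : Type*} (G : SimpleGraph α) : SimpleGraph (α ⊕ α ⊕ Unit) :=
  SimpleGraph.fromRel (fun a b =>
    (∃ x y, a = Sum.inl x ∧ b = Sum.inl y ∧ G.Adj x y) ∨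
    (∃ x y, a = Sum.inl x ∧ b = Sum.inr (Sum.inl y) ∧ G.Adj x y) ∨
    (∃ y, a = Sum.inr (Sum.inl y) ∧ b = Sum.inr (Sum.inr ())))


/-! Let `c` be the colour of the apex `z`. Every shadow vertex `y a` is adjacent to `z`, so none is
coloured `c`; a vertex `x a` not coloured `c` can therefore only see its own colour from `y a` if
`y a` carries it too. Some `x a` is coloured `c`, since every `x` vertex must see `c` and no shadow
vertex carries it. That `x a` must see the colour `d ≠ c` of `y a` at some `x b` or `y b` with
`b ~ a`. But `x b` is adjacent to `y a`, so it is not coloured `d`; and `y b` is coloured `d` only if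
`x b` is, because `x b`, adjacent to `x a`, is not coloured `c`. -/

theorem IsFallColoring.exists_adj_of_ne {α : Type*} {G : SimpleGraph α} {k : ℕ}
    {f : α → Fin k} (hf : IsFallColoring G f) {v : α} {c : Fin k} (hc : f v ≠ c) :
    ∃ u, G.Adj v u ∧ f u = c := by
  obtain ⟨u, rfl | hvu, rfl⟩ := hf.2 v c
  · exact absurd rfl hc
  · exact ⟨u, hvu, rfl⟩

section Mycielskian

variable {α : Type*} {G : SimpleGraph α}

@[simp]
theorem mycielskian_adj_inl_inl {a b : α} :
    (mycielskian G).Adj (.inl a) (.inl b) ↔ G.Adj a b := by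
  simp [mycielskian, G.adj_comm b a]
  exact fun h => h.ne

@[simp]
theorem mycielskian_adj_inl_inr_inl {a b : α} :
    (mycielskian G).Adj (.inl a) (.inr (.inl b)) ↔ G.Adj a b := by
  simp [mycielskian]

@[simp]
theorem mycielskian_adj_inr_inl_inr_inr {a : α} :
    (mycielskian G).Adj (.inr (.inl a)) (.inr (.inr ())) := by
  simp [mycielskian]

theorem mycielskian_adj_inl_iff {a : α} {v : α ⊕ α ⊕ Unit} :
    (mycielskian G).Adj (.inl a) v ↔ ∃ b, G.Adj a b ∧ (v = .inl b ∨ v = .inr (.inl b)) := by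
  rcases v with b | b | ⟨⟨⟩⟩
  · simp
  · simp
  · simp [mycielskian]

theorem mycielskian_adj_inr_inl_iff {a : α} {v : α ⊕ α ⊕ Unit} :
    (mycielskian G).Adj (.inr (.inl a)) v ↔ v = .inr (.inr ()) ∨ ∃ b, G.Adj a b ∧ v = .inl b := by
  rcases v with b | b | ⟨⟨⟩⟩ <;> simp [mycielskian, G.adj_comm]

namespace IsFallColoring

variable {k : ℕ} {f : α ⊕ α ⊕ Unit → Fin k} (hf : IsFallColoring (mycielskian G) f)
include hf

theorem mycielskian_shadow_ne_apex (a : α) : f (.inr (.inl a)) ≠ f (.inr (.inr ())) :=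
  hf.1 _ _ mycielskian_adj_inr_inl_inr_inr

theorem mycielskian_eq_shadow_of_ne_apex {a : α} (ha : f (.inl a) ≠ f (.inr (.inr ()))) :
    f (.inl a) = f (.inr (.inl a)) := by
  by_contra hne
  obtain ⟨u, hu, hfu⟩ := hf.exists_adj_of_ne (Ne.symm hne)
  obtain rfl | ⟨b, hab, rfl⟩ := mycielskian_adj_inr_inl_iff.1 hu
  · exact ha hfu.symm
  · exact hf.1 _ _ (mycielskian_adj_inl_inl.2 hab.symm) hfu

theorem mycielskian_exists_eq_apex [Nonempty α] : ∃ a, f (.inl a) = f (.inr (.inr ())) := by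
  obtain ⟨a⟩ := ‹Nonempty α›
  by_cases ha : f (.inl a) = f (.inr (.inr ()))
  · exact ⟨a, ha⟩
  obtain ⟨u, hu, hfu⟩ := hf.exists_adj_of_ne ha
  obtain ⟨b, -, rfl | rfl⟩ := mycielskian_adj_inl_iff.1 hu
  · exact ⟨b, hfu⟩
  · exact absurd hfu (hf.mycielskian_shadow_ne_apex b)

theorem not_mycielskian [Nonempty α] : False := by
  obtain ⟨a, ha⟩ := hf.mycielskian_exists_eq_apex
  obtain ⟨u, hu, hfu⟩ := hf.exists_adj_of_ne (ha.trans_ne (hf.mycielskian_shadow_ne_apex a).symm)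
  obtain ⟨b, hab, rfl | rfl⟩ := mycielskian_adj_inl_iff.1 hu
  · exact hf.1 _ _ (mycielskian_adj_inl_inr_inl.2 hab.symm) hfu
  · have hb : f (.inl b) ≠ f (.inr (.inr ())) := fun hb =>
      hf.1 _ _ (mycielskian_adj_inl_inl.2 hab) (ha.trans hb.symm)
    exact hf.1 _ _ (mycielskian_adj_inl_inr_inl.2 hab.symm)
      ((hf.mycielskian_eq_shadow_of_ne_apex hb).trans hfu)

end IsFallColoring

end Mycielskian

/-- the Mycielskian of any graph has no fall coloring. -/
theorem fall_mycielskian_empty {α : Type*} [Nonempty α] (G : SimpleGraph α) :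
    Fall (mycielskian G) = ∅ :=
  Set.eq_empty_of_forall_notMem fun _ ⟨_, _, hf⟩ => hf.not_mycielskian
end

section
/- Let G be a bipartite graph and G^c its complement. Then Fall(G^c) ⊆ {χ(G^c)}, and Fall(G^c) is nonempty if and only if the subgraph of G induced on its non-isolated vertices has a perfect matching; in that case Fall(G^c) = { |V(G)| − (1/2)·|{x ∈ V(G) : deg_G(x) > 0}| }. -/
open SimpleGraph

/-!
The color classes of a proper coloring of `Gᶜ` are cliques of `G`, so for triangle-free `G` they
are single vertices or edges of `G`. Counting classes therefore gives `2 |V| ≤ 2 k + |N|` for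
every proper `k`-coloring of `Gᶜ`, where `N` is the set of non-isolated vertices of `G`.
In a fall coloring, a `G`-neighbour of a non-isolated vertex `u` has to see the color of `u`,
which forces a `G`-neighbour of `u` into the class of `u`. So the classes are the edges of a
perfect matching of `N` together with the isolated vertices, and equality `2 |V| = 2 k + |N|`
holds; this pins down `k` and makes it the chromatic number. Conversely, coloring every vertex by
its matching edge (isolated vertices by themselves) is a fall coloring of `Gᶜ`.
-/

open Finset

theorem Finset.sum_card_fiberwise_eq_card {α β : Type*} [Fintype β] [DecidableEq β]
    (f : α → β) (s : Finset α) : ∑ c, #{v ∈ s | f v = c} = #s := by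
  simpa using sum_card_fiberwise_eq_card_filter s univ f

namespace SimpleGraph

variable {α β : Type*} {G : SimpleGraph α}

theorem IsClique.card_lt_of_cliqueFree {n : ℕ} (hG : G.CliqueFree n) {s : Finset α}
    (hs : G.IsClique (s : Set α)) : #s < n := by
  by_contra! h
  obtain ⟨t, hts, ht⟩ := exists_subset_card_eq h
  exact hG t ⟨hs.subset (by simpa using hts), ht⟩

theorem CliqueFree.not_adj_of_adj_of_adj (hG : G.CliqueFree 3) {u v w : α} (hv : G.Adj u v)
    (hw : G.Adj u w) : ¬G.Adj v w := fun hvw =>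
  isIndepSet_neighborSet_of_triangleFree G hG u hv hw hvw.ne hvw

open scoped Classical in
theorem IsClique.two_mul_card_le_two_add_card_support (hG : G.CliqueFree 3) {s : Finset α}
    (hs : G.IsClique (s : Set α)) : 2 * #s ≤ 2 + #{v ∈ s | v ∈ G.support} := by
  obtain hs1 | hs2 : #s ≤ 1 ∨ #s = 2 := by have := hs.card_lt_of_cliqueFree hG; omega
  · omega
  obtain ⟨u, v, huv, rfl⟩ := card_eq_two.1 hs2
  have hadj : G.Adj u v := hs (by simp) (by simp) huv
  have hsupp : ∀ x ∈ ({u, v} : Finset α), x ∈ G.support := by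
    simpa using ⟨hadj.mem_support_left, hadj.mem_support_right⟩
  rw [filter_true_of_mem hsupp, hs2]

theorem eq_or_adj_of_compl_proper {f : α → β} (hf : ∀ u v, Gᶜ.Adj u v → f u ≠ f v)
    {u v : α} (h : f u = f v) : u = v ∨ G.Adj u v := by
  by_contra! huv
  exact hf u v ((compl_adj G u v).2 huv) h

section Counting

open scoped Classical

variable [Fintype α]

theorem two_mul_card_fiber_le_of_coloring_compl [DecidableEq β] (hG : G.CliqueFree 3)
    (C : Gᶜ.Coloring β) (c : β) :
    2 * #{v | C v = c} ≤ 2 + #{v ∈ G.support.toFinset | C v = c} := by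
  have hclique : G.IsClique (({v | C v = c} : Finset α) : Set α) := by
    simpa [Coloring.colorClass] using (isIndepSet_compl G).1 (C.isIndepSet_colorClass c)
  convert hclique.two_mul_card_le_two_add_card_support hG using 3
  ext v
  simp [and_comm]

theorem two_mul_card_le_of_coloring_compl [Fintype β] [DecidableEq β] (hG : G.CliqueFree 3)
    (C : Gᶜ.Coloring β) : 2 * Fintype.card α ≤ 2 * Fintype.card β + #G.support.toFinset :=
  calc 2 * Fintype.card α = ∑ c, 2 * #{v | C v = c} := by
        rw [← mul_sum, sum_card_fiberwise_eq_card, card_univ]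
    _ ≤ ∑ c, (2 + #{v ∈ G.support.toFinset | C v = c}) :=
        sum_le_sum fun c _ => two_mul_card_fiber_le_of_coloring_compl hG C c
    _ = 2 * Fintype.card β + #G.support.toFinset := by
        rw [sum_add_distrib, sum_card_fiberwise_eq_card, sum_const, card_univ, smul_eq_mul,
          mul_comm]

end Counting

structure IsMatchingInvolution (G : SimpleGraph α) (p : α → α) : Prop where
  involutive : Function.Involutive p
  adj : ∀ u ∈ G.support, G.Adj u (p u)
  eq_self : ∀ u ∉ G.support, p u = u

theorem exists_isPerfectMatching_induce_support_iff :
    (∃ M : (G.induce G.support).Subgraph, M.IsPerfectMatching) ↔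
      ∃ p, G.IsMatchingInvolution p := by
  classical
  constructor
  · rintro ⟨M, hM⟩
    choose q hq hq_unique using Subgraph.isPerfectMatching_iff.1 hM
    refine ⟨fun u => if hu : u ∈ G.support then q ⟨u, hu⟩ else u, fun u => ?_,
      fun u hu => ?_, fun u hu => dif_neg hu⟩
    · by_cases hu : u ∈ G.support
      · have hqu : (q ⟨u, hu⟩ : α) ∈ G.support := (q ⟨u, hu⟩).2
        simp only [hu, hqu, dite_true]
        exact congrArg Subtype.val (hq_unique _ _ (hq ⟨u, hu⟩).symm).symm
      · simp [hu]
    · simpa [hu] using M.adj_sub (hq ⟨u, hu⟩)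
  · rintro ⟨p, hp_inv, hp_adj, -⟩
    have hp_mem (u : G.support) : p u ∈ G.support := (hp_adj u u.2).symm.mem_support_left
    let M : (G.induce G.support).Subgraph :=
      { verts := Set.univ
        Adj := fun u v => (v : α) = p u
        adj_sub := fun {u v} h => by simpa [h] using hp_adj u u.2
        edge_vert := fun _ => trivial
        symm := ⟨fun u v h => by simp [h, hp_inv u]⟩ }
    refine ⟨M, Subgraph.isPerfectMatching_iff.2 fun u => ⟨⟨p u, hp_mem u⟩, rfl, ?_⟩⟩
    exact fun v hv => Subtype.ext hv

end SimpleGraph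

theorem natCard_range_mem_fall {α β : Type*} [Finite α] [Nonempty α] {H : SimpleGraph α}
    (f : α → β) (hf : ∀ u v, H.Adj u v → f u ≠ f v)
    (hsees : ∀ v w, ∃ u, (u = v ∨ H.Adj v u) ∧ f u = f w) :
    Nat.card (Set.range f) ∈ Fall H := by
  let e := Finite.equivFin (Set.range f)
  refine ⟨Nat.card_pos, fun u => e (Set.rangeFactorization f u), fun u v huv h => ?_,
    fun v c => ?_⟩
  · exact hf u v huv (congrArg Subtype.val (e.injective h))
  · obtain ⟨⟨_, w, rfl⟩, rfl⟩ := e.surjective c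
    obtain ⟨u, hu, hfu⟩ := hsees v w
    exact ⟨u, hu, congrArg e (Subtype.ext hfu)⟩

namespace SimpleGraph.IsMatchingInvolution

variable {α : Type*} {G : SimpleGraph α} {p : α → α}

theorem natCard_range_mem_fall_compl [Finite α] [Nonempty α] (hG : G.CliqueFree 3)
    (hp : G.IsMatchingInvolution p) : Nat.card (Set.range fun u => s(u, p u)) ∈ Fall Gᶜ := by
  refine _root_.natCard_range_mem_fall _ (fun u v huv h => ?_) fun v w => ?_
  · obtain ⟨hne, hnadj⟩ := (compl_adj G u v).1 huv
    rcases Sym2.eq_iff.1 h with ⟨rfl, -⟩ | ⟨rfl, -⟩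
    · exact hne rfl
    · by_cases hv : v ∈ G.support
      · exact hnadj (hp.adj v hv).symm
      · exact hne (hp.eq_self v hv)
  · by_cases hvw : G.Adj v w
    · -- then `p w` is not adjacent to `v`, and carries the same color `s(w, p w)` as `w`
      refine ⟨p w, ?_, by rw [hp.involutive w, Sym2.eq_swap]⟩
      have hw := hp.adj w hvw.mem_support_right
      by_cases hpw : p w = v
      · exact Or.inl hpw
      · exact Or.inr ((compl_adj G v (p w)).2
          ⟨Ne.symm hpw, hG.not_adj_of_adj_of_adj hvw.symm hw⟩)
    · by_cases hwv : w = v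
      · exact ⟨w, Or.inl hwv, rfl⟩
      · exact ⟨w, Or.inr ((compl_adj G v w).2 ⟨Ne.symm hwv, hvw⟩), rfl⟩

end SimpleGraph.IsMatchingInvolution

namespace IsFallColoring

open SimpleGraph

variable {α : Type*} {k : ℕ} {f : α → Fin k}

def toColoring {H : SimpleGraph α} (hf : IsFallColoring H f) : H.Coloring (Fin k) :=
  Coloring.mk f fun h => hf.1 _ _ h

variable {G : SimpleGraph α}

theorem exists_adj_eq (hf : IsFallColoring Gᶜ f) {u : α} (hu : u ∈ G.support) :
    ∃ v, G.Adj u v ∧ f v = f u := by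
  obtain ⟨y, hy⟩ := hu
  -- the vertex `x` at which the neighbour `y` of `u` sees the color of `u`
  obtain ⟨x, hxy, hx⟩ := hf.2 y (f u)
  rcases eq_or_adj_of_compl_proper hf.1 hx with rfl | hxu
  · rcases hxy with rfl | hyx
    · exact (G.irrefl hy).elim
    · exact absurd hy.symm ((compl_adj G y x).1 hyx).2
  · exact ⟨x, hxu.symm, hx⟩

theorem exists_isMatchingInvolution (hG : G.CliqueFree 3) (hf : IsFallColoring Gᶜ f) :
    ∃ p, G.IsMatchingInvolution p := by
  classical
  choose q hq_adj hq_eq using fun (u : G.support) => hf.exists_adj_eq u.2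
  refine ⟨fun u => if hu : u ∈ G.support then q ⟨u, hu⟩ else u, fun u => ?_, fun u hu => ?_,
    fun u hu => dif_neg hu⟩
  · by_cases hu : u ∈ G.support
    · have hqu : q ⟨u, hu⟩ ∈ G.support := (hq_adj ⟨u, hu⟩).mem_support_right
      simp only [hu, hqu, dite_true]
      have hsame := (hq_eq ⟨_, hqu⟩).trans (hq_eq ⟨u, hu⟩)
      exact (eq_or_adj_of_compl_proper hf.1 hsame).resolve_right
        (hG.not_adj_of_adj_of_adj (hq_adj ⟨_, hqu⟩) (hq_adj ⟨u, hu⟩).symm)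
    · simp [hu]
  · simpa [hu] using hq_adj ⟨u, hu⟩

open scoped Classical

variable [Fintype α] [Nonempty α]

theorem two_add_card_fiber_le (hf : IsFallColoring Gᶜ f) (c : Fin k) :
    2 + #{v ∈ G.support.toFinset | f v = c} ≤ 2 * #{v | f v = c} := by
  obtain ⟨w, -, hw⟩ := hf.2 (Classical.arbitrary α) c
  have hfiber_pos : 0 < #{v | f v = c} := card_pos.2 ⟨w, by simpa using hw⟩
  by_cases hN : ∃ u, u ∈ G.support ∧ f u = c
  · obtain ⟨u, hu, rfl⟩ := hN
    obtain ⟨v, huv, hv⟩ := hf.exists_adj_eq hu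
    have hfiber_two : 1 < #{x | f x = f u} :=
      one_lt_card.2 ⟨u, by simp, v, by simpa using hv, huv.ne⟩
    have hsub : #{x ∈ G.support.toFinset | f x = f u} ≤ #{x | f x = f u} :=
      card_le_card fun x => by simp +contextual
    omega
  · rw [filter_false_of_mem (by simpa using hN), card_empty]
    omega

theorem two_mul_card_eq (hG : G.CliqueFree 3) (hf : IsFallColoring Gᶜ f) :
    2 * Fintype.card α = 2 * k + #G.support.toFinset := by
  refine le_antisymm (by simpa using two_mul_card_le_of_coloring_compl hG hf.toColoring) ?_
  calc 2 * k + #G.support.toFinset = ∑ c, (2 + #{v ∈ G.support.toFinset | f v = c}) := by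
        rw [sum_add_distrib, sum_card_fiberwise_eq_card, sum_const, card_univ, smul_eq_mul,
          mul_comm, Fintype.card_fin]
    _ ≤ ∑ c, 2 * #{v | f v = c} := sum_le_sum fun c _ => hf.two_add_card_fiber_le c
    _ = 2 * Fintype.card α := by
        rw [← mul_sum, sum_card_fiberwise_eq_card, card_univ]

end IsFallColoring

namespace SimpleGraph

variable {α : Type*} [Fintype α] [Nonempty α] {G : SimpleGraph α}

theorem fall_compl_nonempty_iff (hG : G.CliqueFree 3) :
    (Fall Gᶜ).Nonempty ↔ ∃ p, G.IsMatchingInvolution p := by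
  constructor
  · rintro ⟨k, -, f, hf⟩
    exact hf.exists_isMatchingInvolution hG
  · rintro ⟨p, hp⟩
    exact ⟨_, hp.natCard_range_mem_fall_compl hG⟩

theorem two_mul_natCard_eq_of_mem_fall_compl (hG : G.CliqueFree 3) {k : ℕ}
    (hk : k ∈ Fall Gᶜ) :
    2 * Nat.card α = 2 * k + Nat.card G.support := by
  classical
  obtain ⟨-, f, hf⟩ := hk
  simpa [Nat.card_eq_fintype_card, Set.toFinset_card] using hf.two_mul_card_eq hG

theorem chromaticNumber_compl_eq_of_mem_fall (hG : G.CliqueFree 3) {k : ℕ}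
    (hk : k ∈ Fall Gᶜ) :
    Gᶜ.chromaticNumber = k := by
  classical
  obtain ⟨-, f, hf⟩ := hk
  refine le_antisymm (Colorable.chromaticNumber_le ⟨hf.toColoring⟩)
    (le_chromaticNumber_iff_coloring.2 fun m C => ?_)
  have hk := hf.two_mul_card_eq hG
  have hm := two_mul_card_le_of_coloring_compl hG C
  rw [Fintype.card_fin] at hm
  exact_mod_cast (by omega : k ≤ m)

end SimpleGraph

/-- fall colorings of complements of bipartite graphs. -/
theorem fall_compl_bipartite {α : Type*} [Fintype α] [Nonempty α]
    (G : SimpleGraph α) (hbip : G.Colorable 2) :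
    (∀ k ∈ Fall Gᶜ, (k : ℕ∞) = Gᶜ.chromaticNumber) ∧
    ((Fall Gᶜ).Nonempty ↔
      ∃ M : (SimpleGraph.induce {x : α | ∃ y, G.Adj x y} G).Subgraph, M.IsPerfectMatching) ∧
    ((∃ M : (SimpleGraph.induce {x : α | ∃ y, G.Adj x y} G).Subgraph, M.IsPerfectMatching) →
      Fall Gᶜ = {Nat.card α - Nat.card {x : α // ∃ y, G.Adj x y} / 2}) := by
  have hG : G.CliqueFree 3 := hbip.cliqueFree (by norm_num)
  have hmatching : (Fall Gᶜ).Nonempty ↔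
      ∃ M : (SimpleGraph.induce {x : α | ∃ y, G.Adj x y} G).Subgraph, M.IsPerfectMatching :=
    (fall_compl_nonempty_iff hG).trans exists_isPerfectMatching_induce_support_iff.symm
  refine ⟨fun k hk => (chromaticNumber_compl_eq_of_mem_fall hG hk).symm, hmatching,
    fun hM => Set.eq_singleton_iff_nonempty_unique_mem.2 ⟨hmatching.2 hM, fun k hk => ?_⟩⟩
  have hcount := two_mul_natCard_eq_of_mem_fall_compl hG hk
  change 2 * Nat.card α = 2 * k + Nat.card {x : α // ∃ y, G.Adj x y} at hcount
  omega
end
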